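/- For all x, x′, z, z′ ∈ ℝ^d and every α > 0, if ‖x − z‖ < α and ‖x′ − z′‖ < α, then |exp(−‖x − x′‖²/2) − exp(−‖z − z′‖²/2)| < 1 − exp(−2α(‖z − z′‖ + α)). -/

import Mathlib

/-!
Write `a = ‖x - x'‖` and `b = ‖z - z'‖`. The triangle inequality gives `|a - b| < 2α`, hence
`|a² - b²| = |a - b| |a + b| < 2α (2b + 2α)`. For `0 ≤ v ≤ u` we have
`exp (-v) - exp (-u) = exp (-v) (1 - exp (-(u - v))) ≤ 1 - exp (-(u - v))`, and the claim follows
with `u, v = a² / 2, b² / 2`.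
-/

namespace Real

theorem abs_exp_neg_sub_exp_neg_le {u v : ℝ} (hu : 0 ≤ u) (hv : 0 ≤ v) :
    |exp (-u) - exp (-v)| ≤ 1 - exp (-|u - v|) := by
  wlog hvu : v ≤ u generalizing u v
  · rw [abs_sub_comm, abs_sub_comm u]
    exact this hv hu (le_of_not_ge hvu)
  have hfactor : exp (-v) - exp (-u) = exp (-v) * (1 - exp (-(u - v))) := by
    rw [mul_sub, mul_one, ← exp_add]
    ring_nf
  have hgap : 0 ≤ 1 - exp (-(u - v)) := sub_nonneg.2 (exp_le_one_iff.2 (by linarith))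
  rw [abs_sub_comm, abs_of_nonneg (sub_nonneg.2 (exp_le_exp.2 (by linarith))),
    abs_of_nonneg (sub_nonneg.2 hvu), hfactor]
  exact mul_le_of_le_one_left hgap (exp_le_one_iff.2 (by linarith))

end Real

theorem abs_sq_sub_sq_lt {a b c : ℝ} (h : |a - b| < c) : |a ^ 2 - b ^ 2| < c * (2 * |b| + c) := by
  have hsum : |a + b| ≤ |a - b| + 2 * |b| := by
    calc |a + b| = |(a - b) + 2 * b| := by ring_nf
      _ ≤ |a - b| + |2 * b| := abs_add_le _ _
      _ = |a - b| + 2 * |b| := by rw [abs_mul, abs_two]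
  calc |a ^ 2 - b ^ 2| = |a - b| * |a + b| := by rw [sq_sub_sq, abs_mul, mul_comm]
    _ ≤ |a - b| * (2 * |b| + |a - b|) := by gcongr; linarith
    _ < c * (2 * |b| + c) := by
      have := abs_nonneg (a - b)
      have := abs_nonneg b
      nlinarith

theorem stmt_3 (d : ℕ) (x x' z z' : EuclideanSpace ℝ (Fin d)) (α : ℝ)
    (h1 : ‖x - z‖ < α) (h2 : ‖x' - z'‖ < α) :
    |Real.exp (-‖x - x'‖ ^ 2 / 2) - Real.exp (-‖z - z'‖ ^ 2 / 2)| <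
      1 - Real.exp (-(2 * α * (‖z - z'‖ + α))) := by
  set a := ‖x - x'‖
  set b := ‖z - z'‖
  have hdist : |a - b| < 2 * α := by
    have := dist_dist_dist_le x x' z z'
    rw [Real.dist_eq] at this
    simp only [dist_eq_norm] at this
    linarith
  have hsq : |a ^ 2 / 2 - b ^ 2 / 2| < 2 * α * (b + α) := by
    have := abs_sq_sub_sq_lt hdist
    rw [abs_of_nonneg (norm_nonneg (z - z'))] at this
    rw [← sub_div, abs_div, abs_two]
    linarith
  calc |Real.exp (-a ^ 2 / 2) - Real.exp (-b ^ 2 / 2)|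
      = |Real.exp (-(a ^ 2 / 2)) - Real.exp (-(b ^ 2 / 2))| := by simp only [neg_div]
    _ ≤ 1 - Real.exp (-|a ^ 2 / 2 - b ^ 2 / 2|) :=
      Real.abs_exp_neg_sub_exp_neg_le (by positivity) (by positivity)
    _ < 1 - Real.exp (-(2 * α * (b + α))) := by gcongr
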